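/- Let K be a knot in S^3 and h ∈ M(K). If a_1, …, a_m denote the numbers of intersections of K with the thick levels of h and b_1, …, b_{m-1} denote the numbers of intersections of K with the thin levels of h, then w(h) = (1/2)(Σ_{i=1}^m a_i² − Σ_{i=1}^{m-1} b_i²). -/

import Mathlib

open scoped Manifold Topology
open Metric Set Topology

noncomputable section

/-! ### Basic spaces -/

/-- The 3-sphere `S³`, realized as the unit sphere in `ℝ⁴`. -/
abbrev S3 : Type := Metric.sphere (0 : EuclideanSpace ℝ (Fin 4)) 1

/-- The closed unit disk in `ℂ`, model for a 2-disk. -/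
def Disk2 : Set ℂ := Metric.closedBall 0 1

/-- A standard annulus in `ℂ`. -/
def Annulus2 : Set ℂ := {z : ℂ | 1 ≤ ‖z‖ ∧ ‖z‖ ≤ 2}

/-- A subset of `S³` is a knot if it is homeomorphic to the circle. -/
def IsKnot (K : Set S3) : Prop := Nonempty (K ≃ₜ Circle)

/-- A subset of `S³` which is a (topological) torus surface. -/
def IsTorusSurface (T : Set S3) : Prop := Nonempty (T ≃ₜ (Circle × Circle))

/-- A subset of `S³` homeomorphic to a circle (a simple closed curve). -/
def IsCircleSet (s : Set S3) : Prop := Nonempty (s ≃ₜ Circle)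

/-- A subset of `S³` homeomorphic to a closed 3-ball. -/
def IsBall3 (B : Set S3) : Prop :=
  Nonempty (B ≃ₜ (Metric.closedBall (0 : EuclideanSpace ℝ (Fin 3)) 1))

/-- A subset of `S³` homeomorphic to a solid torus. -/
def IsSolidTorusSet (V : Set S3) : Prop := Nonempty (V ≃ₜ (Circle × ↥Disk2))

/-- Ambient isotopy of subsets of `S³`: a continuous family of homeomorphisms starting
at the identity carrying `A` onto `B`. -/
def AmbientIsotopic (A B : Set S3) : Prop :=
  ∃ F : C(ℝ × S3, S3), (∀ x, F (0, x) = x) ∧ (∀ t, IsHomeomorph fun x => F (t, x)) ∧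
    (fun x => F (1, x)) '' A = B

/-- The standard (round) unknot in `S³`: a great circle. -/
def stdUnknot : Set S3 :=
  {x : S3 | (x : EuclideanSpace ℝ (Fin 4)) 2 = 0 ∧ (x : EuclideanSpace ℝ (Fin 4)) 3 = 0}

/-- `D` is an embedded disk in `S³` with boundary the curve `s`. -/
def IsDiskWithBoundary (D s : Set S3) : Prop :=
  ∃ f : ℂ → S3, ContinuousOn f Disk2 ∧ Set.InjOn f Disk2 ∧ f '' Disk2 = D ∧
    f '' Metric.sphere (0 : ℂ) 1 = s

/-- The curve `s` bounds a disk contained in `A`. -/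
def BoundsDiskIn (s A : Set S3) : Prop := ∃ D, D ⊆ A ∧ IsDiskWithBoundary D s

/-- Two curves cobound an embedded annulus inside `W` (are parallel in `W`). -/
def CoboundAnnulusIn (γ₁ γ₂ W : Set S3) : Prop :=
  ∃ f : ℂ → S3, ContinuousOn f Annulus2 ∧ Set.InjOn f Annulus2 ∧ f '' Annulus2 ⊆ W ∧
    f '' Metric.sphere (0 : ℂ) 1 = γ₁ ∧ f '' Metric.sphere (0 : ℂ) 2 = γ₂

/-! ### Morse functions on `S³` adapted to a knot -/

/-- `h : S³ → ℝ` is smooth with exactly two critical points on `S³`. -/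
def SmoothTwoCrit (h : S3 → ℝ) : Prop :=
  ContMDiff (𝓡 3) 𝓘(ℝ, ℝ) (⊤ : ℕ∞) h ∧
    {x : S3 | mfderiv (𝓡 3) 𝓘(ℝ, ℝ) h x = 0}.ncard = 2

/-- An element of `𝓜(K)`: a Morse function `h` on `S³` with exactly two critical points
such that `h` restricted to the knot `K` is Morse, together with the (finitely many,
distinct) critical values `c 0 < c 1 < ⋯ < c n` of `h|_K`.  Since `h|_K` is a Morse
function on a circle, its critical points are precisely its local extrema on `K`. -/
structure KnotMorse (K : Set S3) where
  /-- the underlying Morse function on `S³` -/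
  h : S3 → ℝ
  smooth_twoCrit : SmoothTwoCrit h
  /-- `h|_K` has `n + 1` critical points/values -/
  n : ℕ
  /-- the critical values of `h|_K` -/
  c : Fin (n + 1) → ℝ
  c_mono : StrictMono c
  /-- each critical value is realized by exactly one critical point of `h|_K` -/
  crit_exists : ∀ i, ∃! x, x ∈ K ∧ IsLocalExtrOn h K x ∧ h x = c i
  /-- every critical point of `h|_K` has one of the listed critical values -/
  crit_complete : ∀ x ∈ K, IsLocalExtrOn h K x → ∃ i, h x = c i
  /-- the knot lies between the lowest and highest critical levels -/
  between : ∀ x ∈ K, c 0 ≤ h x ∧ h x ≤ c (Fin.last n)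
  /-- regular level sets of `h|_K` are finite -/
  level_finite : ∀ r : ℝ, (∀ i, r ≠ c i) → (K ∩ h ⁻¹' {r}).Finite

namespace KnotMorse

variable {K : Set S3} (m : KnotMorse K)

/-- A regular value `r_{i+1}` with `c i < r_{i+1} < c (i+1)`. -/
def midpt (i : Fin m.n) : ℝ := (m.c i.castSucc + m.c i.succ) / 2

/-- `|K ∩ h⁻¹(r_{i+1})|`, the number of intersections with the `i`-th regular level. -/
def cnt (i : Fin m.n) : ℕ := (K ∩ m.h ⁻¹' {m.midpt i}).ncard

/-- The width `w(h) = Σᵢ |K ∩ h⁻¹(rᵢ)|`. -/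
def width : ℕ := ∑ i, m.cnt i

/-- The bridge number `b(h) = (n+1)/2`, the number of maxima of `h|_K`. -/
def bridge : ℕ := (m.n + 1) / 2

/-- The trunk `trunk(h) = maxᵢ |K ∩ h⁻¹(rᵢ)|`. -/
def trunk : ℕ := Finset.univ.sup fun i => m.cnt i

end KnotMorse

/-- The width `w(K)` of a knot. -/
def knotWidth (K : Set S3) : ℕ := sInf {w | ∃ m : KnotMorse K, m.width = w}

/-- The bridge number `b(K)` of a knot. -/
def knotBridge (K : Set S3) : ℕ := sInf {b | ∃ m : KnotMorse K, m.bridge = b}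

/-- The trunk `trunk(K)` of a knot. -/
def knotTrunk (K : Set S3) : ℕ := sInf {t | ∃ m : KnotMorse K, m.trunk = t}

/-- `h` is a thin position for `K` if it realizes the width. -/
def KnotMorse.IsThinPosition {K : Set S3} (m : KnotMorse K) : Prop := m.width = knotWidth K

/-- `h` is a bridge position for `K` if it realizes the bridge number and all maxima of
`h|_K` occur above all minima. -/
def KnotMorse.IsBridgePosition {K : Set S3} (m : KnotMorse K) : Prop :=
  m.bridge = knotBridge K ∧
    ∀ x ∈ K, ∀ y ∈ K, IsLocalMaxOn m.h K x → IsLocalMinOn m.h K y → m.h y < m.h x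

/-! ### The solid torus, patterns, winding number, satellites -/

/-- The standard solid torus `V = S¹ × D²`. -/
abbrev STS : Type := Circle × ↥Disk2

/-- The core circle `S¹ × {0}` of the standard solid torus. -/
def stsCore : Set STS := {p | (p.2 : ℂ) = 0}

/-- The boundary torus `S¹ × ∂D²` of the standard solid torus. -/
def stsBoundary : Set STS := {p | ‖(p.2 : ℂ)‖ = 1}

/-- The meridian disk `{z} × D²` of the standard solid torus. -/
def meridianDisk (z : Circle) : Set STS := {p | p.1 = z}

/-- A continuous map `f` of the circle to itself has degree `d`, expressed via a lift along
the universal covering `Circle.exp : ℝ → S¹`. -/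
def CircleMapDegree (f : Circle → Circle) (d : ℤ) : Prop :=
  ∃ g : ℝ → ℝ, Continuous g ∧ (∀ t, f (Circle.exp t) = Circle.exp (g t)) ∧
    ∀ t, g (t + 2 * Real.pi) = g t + d * (2 * Real.pi)

/-- The pattern `P ⊆ S¹ × D²` has winding number `w`: the absolute algebraic intersection
number of a meridian disk with `P`, i.e. the absolute degree of the composition of a
parametrization of `P` with the retraction onto the core. -/
def PatternWinding (P : Set STS) (w : ℕ) : Prop :=
  ∃ α : Circle → STS, IsEmbedding α ∧ Set.range α = P ∧
    ∃ d : ℤ, d.natAbs = w ∧ CircleMapDegree (fun z => (α z).1) d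

/-- The pattern `P` is a braid of index `n`: the solid torus admits a foliation (here, the
image of the product foliation under a self-homeomorphism of `S¹ × D²`) each of whose
leaves is a meridian disk meeting `P` exactly `n` times. -/
def IsBraidOfIndex (P : Set STS) (n : ℕ) : Prop :=
  ∃ F : STS ≃ₜ STS, ∀ z : Circle, ((F '' meridianDisk z) ∩ P).ncard = n

/-- A satellite structure on a knot `K ⊆ S³`: a pattern knot `P` in the standard solid
torus meeting every meridian disk, an embedding `φ` of the solid torus into `S³` with
`φ(P) = K`, whose core maps to a nontrivial companion knot `J`. -/
structure SatelliteStructure (K : Set S3) where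
  /-- the pattern `K̂` -/
  P : Set STS
  P_knot : Nonempty (P ≃ₜ Circle)
  /-- every meridian disk of the solid torus meets the pattern -/
  P_meridional : ∀ z : Circle, (meridianDisk z ∩ P).Nonempty
  /-- the embedding of the solid torus into `S³` -/
  φ : STS → S3
  φ_emb : IsEmbedding φ
  image_eq : φ '' P = K
  /-- the companion knot `J` -/
  J : Set S3
  J_knot : IsKnot J
  /-- the companion is a nontrivial knot -/
  J_nontrivial : ¬ AmbientIsotopic J stdUnknot
  /-- the core of the solid torus maps to a knot isotopic to the companion -/
  core_isotopic : AmbientIsotopic (φ '' stsCore) J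

namespace SatelliteStructure

variable {K : Set S3} (s : SatelliteStructure K)

/-- The knotted solid torus `V = φ(S¹ × D²) ⊆ S³` containing `K`. -/
def V : Set S3 := Set.range s.φ

/-- The companion torus `T = ∂V`. -/
def Tb : Set S3 := s.φ '' stsBoundary

end SatelliteStructure

/-! ### Saddles and the singular foliation of a surface -/

/-- `x` is a saddle point of the singular foliation of `T` induced by `h`: the leaf
through `x` (the connected component of the level set of `h|_T` containing `x`) has a
component which is a wedge of two circles `s₁` and `s₂` meeting exactly at `x`. -/
def IsSaddlePt (h : S3 → ℝ) (T : Set S3) (x : S3) : Prop :=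
  x ∈ T ∧ ∃ s₁ s₂ : Set S3, IsCircleSet s₁ ∧ IsCircleSet s₂ ∧ s₁ ∩ s₂ = {x} ∧
    s₁ ∪ s₂ = connectedComponentIn (T ∩ h ⁻¹' {h x}) x

/-- `x` is an inessential saddle of the singular foliation of `T` induced by `h`: a saddle
point one of whose wedge circles is inessential in `T` (bounds a disk in `T`). -/
def IsInessentialSaddle (h : S3 → ℝ) (T : Set S3) (x : S3) : Prop :=
  x ∈ T ∧ ∃ s₁ s₂ : Set S3, IsCircleSet s₁ ∧ IsCircleSet s₂ ∧ s₁ ∩ s₂ = {x} ∧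
    s₁ ∪ s₂ = connectedComponentIn (T ∩ h ⁻¹' {h x}) x ∧
    (BoundsDiskIn s₁ T ∨ BoundsDiskIn s₂ T)

/-- `h` restricted to the surface `T` is Morse (in particular it has finitely many
critical points: local extrema and saddles). -/
def MorseOn (h : S3 → ℝ) (T : Set S3) : Prop :=
  {x ∈ T | IsLocalExtrOn h T x ∨ IsSaddlePt h T x}.Finite

/-- `r` is a regular value of `h` restricted to `A`: no critical points (local extrema or
saddle points of the induced foliation) occur at level `r`. -/
def IsRegularValueOn (h : S3 → ℝ) (A : Set S3) (r : ℝ) : Prop :=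
  ∀ x ∈ A, h x = r → ¬(IsLocalExtrOn h A x ∨ IsSaddlePt h A x)

/-! ### The essential connectivity graph -/

/-- The curves `γ₁, …, γ_n`: connected components of `h⁻¹(r) ∩ T`. -/
def levelCurves (h : S3 → ℝ) (T : Set S3) (r : ℝ) : Set (Set S3) :=
  {γ | ∃ x ∈ h ⁻¹' {r} ∩ T, γ = connectedComponentIn (h ⁻¹' {r} ∩ T) x}

/-- The regions `R₁, …, R_m` obtained by cutting the level sphere `h⁻¹(r)` along the
curves of `h⁻¹(r) ∩ T`: closures of the connected components of the complement. -/
def levelRegions (h : S3 → ℝ) (T : Set S3) (r : ℝ) : Set (Set S3) :=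
  {R | ∃ x ∈ h ⁻¹' {r} \ T, R = closure (connectedComponentIn (h ⁻¹' {r} \ T) x)}

/-- The essential curves in the boundary of a region `R` which join `R` to another region;
these are the edges of the essential connectivity graph incident to the vertex `R`. -/
def essEdgesAt (h : S3 → ℝ) (T : Set S3) (r : ℝ) (R : Set S3) : Set (Set S3) :=
  {γ ∈ levelCurves h T r | ¬ BoundsDiskIn γ T ∧
    ∃ R' ∈ levelRegions h T r, R' ≠ R ∧ γ = R ∩ R'}

/-- `R` is an endpoint of the essential connectivity graph `Γ_r`: a vertex incident to
exactly one edge. -/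
def IsEndpointRegion (h : S3 → ℝ) (T : Set S3) (r : ℝ) (R : Set S3) : Prop :=
  R ∈ levelRegions h T r ∧ (essEdgesAt h T r R).ncard = 1

/-- The trunk of the level 2-sphere `h⁻¹(r)`: the number of endpoints of `Γ_r`. -/
def trunkAt (h : S3 → ℝ) (T : Set S3) (r : ℝ) : ℕ :=
  {R | IsEndpointRegion h T r R}.ncard

/-- The essential connectivity graph `Γ_r`: vertices are the regions of `h⁻¹(r)` cut along
`h⁻¹(r) ∩ T`, and two regions are adjacent when they meet along a curve that is essential
in `T`. -/
def connGraph (h : S3 → ℝ) (T : Set S3) (r : ℝ) : SimpleGraph (levelRegions h T r) where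
  Adj R R' := R ≠ R' ∧ ∃ γ ∈ levelCurves h T r, ¬ BoundsDiskIn γ T ∧
    γ = (R : Set S3) ∩ (R' : Set S3)
  symm := by
    constructor
    rintro R R' ⟨hne, γ, hγ, hess, heq⟩
    exact ⟨hne.symm, γ, hγ, hess, by rw [heq, Set.inter_comm]⟩
  loopless := by constructor; rintro R ⟨hne, -⟩; exact hne rfl

/-- The regular level `rᵢ` of `h|_K` indexed by `i` is a **thick level**: it meets `K`
strictly more than each adjacent regular level (boundary local maxima of the sequence of
intersection numbers also count as thick levels). -/
def KnotMorse.ThickIdx {K : Set S3} (m : KnotMorse K) (i : Fin m.n) : Prop :=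
  (∀ j : Fin m.n, (j : ℕ) + 1 = (i : ℕ) → m.cnt j < m.cnt i) ∧
  (∀ j : Fin m.n, (i : ℕ) + 1 = (j : ℕ) → m.cnt j < m.cnt i)

/-- The regular level `rᵢ` of `h|_K` indexed by `i` (with `1 < i < n`) is a
**thin level**: it meets `K` strictly less than each adjacent regular level. -/
def KnotMorse.ThinIdx {K : Set S3} (m : KnotMorse K) (i : Fin m.n) : Prop :=
  0 < (i : ℕ) ∧ (i : ℕ) + 1 < m.n ∧
  (∀ j : Fin m.n, (j : ℕ) + 1 = (i : ℕ) → m.cnt i < m.cnt j) ∧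
  (∀ j : Fin m.n, (i : ℕ) + 1 = (j : ℕ) → m.cnt i < m.cnt j)

/-! Parametrize `K` by a `2π`-periodic curve starting at a critical point and cut one period at
the `n + 1` critical points. On each arc `h` has no interior local extremum, so by Rolle it is
injective, hence monotone, and a regular level meets the arc once or not at all according as it
separates the values at the ends. The count `N_j` at the `j`-th regular level is therefore the
number of steps of the cyclic tour of critical levels that cross it. Passing the level of a local
minimum (maximum) adds (removes) the two steps at that point, so `N_{j+1} - N_j = ±2`, with
`N_0 = N_{n+1} = 0`. For such a sequence, summation by parts gives
`Σ_peaks N² - Σ_valleys N² = 2 Σ N`, and the peaks and valleys of the zero-extended sequence are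
exactly the thick and thin levels. -/

section Peaks

open Finset

variable {α : Type*} [Preorder α]

/-- `i - 1` truncates, so `0` is never a peak or a valley. -/
def IsPeak (f : ℕ → α) (i : ℕ) : Prop := f (i - 1) < f i ∧ f (i + 1) < f i

def IsValley (f : ℕ → α) (i : ℕ) : Prop := f i < f (i - 1) ∧ f i < f (i + 1)

theorem two_mul_indicator_peak_sub_indicator_valley {N : ℕ → ℤ} {s : ℤ} {i : ℕ} (hs : 0 < s)
    (hl : N (i + 1) = N i + s ∨ N (i + 1) = N i - s)
    (hr : N (i + 2) = N (i + 1) + s ∨ N (i + 2) = N (i + 1) - s) :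
    2 * s * ({j | IsPeak N j}.indicator (N · ^ 2) (i + 1) -
        {j | IsValley N j}.indicator (N · ^ 2) (i + 1)) =
      ((N (i + 1) - N i) - (N (i + 2) - N (i + 1))) * N (i + 1) ^ 2 := by
  simp only [Set.indicator_apply, Set.mem_ofPred_eq, IsPeak, IsValley, Nat.add_sub_cancel]
  rcases hl with hl | hl <;> rcases hr with hr | hr <;> rw [hr, hl] <;> split_ifs <;>
    first | omega | ring

/-- Summation by parts: `2 s (Σ peaks N² - Σ valleys N²) = Σ (Δ N)(N_{i+1}² - N_i²)`, and each
summand on the right is `s² (N_i + N_{i+1})`. -/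
theorem sum_indicator_peak_sub_sum_indicator_valley {N : ℕ → ℤ} {s : ℤ} {n : ℕ} (hs : 0 < s)
    (h0 : N 0 = 0) (hn : N (n + 1) = 0)
    (hstep : ∀ i ≤ n, N (i + 1) = N i + s ∨ N (i + 1) = N i - s) :
    ∑ i ∈ range n, {j | IsPeak N j}.indicator (N · ^ 2) (i + 1) -
        ∑ i ∈ range n, {j | IsValley N j}.indicator (N · ^ 2) (i + 1) =
      s * ∑ i ∈ range n, N (i + 1) := by
  set d : ℕ → ℤ := fun i => N (i + 1) - N i
  have hsq : ∀ i ≤ n, d i * (N (i + 1) ^ 2 - N i ^ 2) = s ^ 2 * (N i + N (i + 1)) := by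
    intro i hi
    rcases hstep i hi with h | h <;> simp only [d, h] <;> ring
  have hleft : ∑ i ∈ range (n + 1), d i * N (i + 1) ^ 2 =
      ∑ i ∈ range n, d i * N (i + 1) ^ 2 := by
    rw [sum_range_succ, hn]; ring
  have hright : ∑ i ∈ range (n + 1), d i * N i ^ 2 =
      ∑ i ∈ range n, d (i + 1) * N (i + 1) ^ 2 := by
    rw [sum_range_succ', h0]; ring
  have hends : ∑ i ∈ range (n + 1), N (i + 1) = ∑ i ∈ range (n + 1), N i := by
    rw [sum_range_succ, hn, sum_range_succ', h0]
  refine mul_left_cancel₀ (by positivity : 2 * s ≠ 0) ?_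
  calc 2 * s * (∑ i ∈ range n, {j | IsPeak N j}.indicator (N · ^ 2) (i + 1) -
          ∑ i ∈ range n, {j | IsValley N j}.indicator (N · ^ 2) (i + 1))
      = ∑ i ∈ range n, (d i - d (i + 1)) * N (i + 1) ^ 2 := by
        rw [← sum_sub_distrib, mul_sum]
        refine sum_congr rfl fun i hi => ?_
        have hi := mem_range.1 hi
        exact two_mul_indicator_peak_sub_indicator_valley hs (hstep i (by omega))
          (hstep (i + 1) (by omega))
    _ = ∑ i ∈ range (n + 1), d i * (N (i + 1) ^ 2 - N i ^ 2) := by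
        simp only [mul_sub, sub_mul, sum_sub_distrib, hleft, hright]
    _ = ∑ i ∈ range (n + 1), s ^ 2 * (N i + N (i + 1)) :=
        sum_congr rfl fun i hi => hsq i (Nat.lt_succ_iff.1 (mem_range.1 hi))
    _ = 2 * s * (s * ∑ i ∈ range n, N (i + 1)) := by
        rw [← mul_sum, sum_add_distrib, ← hends, sum_range_succ, hn]; ring

end Peaks

section Neighbours

variable {α : Type*} {n : ℕ} {f : Fin n → α} {N : ℕ → α} (R : α → α → Prop)

theorem forall_val_succ_eq_imp_iff (hN : ∀ j : Fin n, N (j + 1) = f j) (j : Fin n) :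
    (∀ j' : Fin n, (j' : ℕ) + 1 = j → R (f j') (f j)) ↔ ((j : ℕ) = 0 ∨ R (N j) (N (j + 1))) := by
  rw [← hN]
  constructor
  · intro h
    refine or_iff_not_imp_left.2 fun hj => ?_
    have := h ⟨j - 1, by omega⟩ (by simp only; omega)
    rwa [← hN, show (j : ℕ) - 1 + 1 = j by omega] at this
  · rintro (hj | hR) j' hj'
    · omega
    · rwa [← hN, hj']

theorem forall_eq_val_succ_imp_iff (hN : ∀ j : Fin n, N (j + 1) = f j) (j : Fin n) :
    (∀ j' : Fin n, (j : ℕ) + 1 = j' → R (f j') (f j)) ↔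
      ((j : ℕ) + 1 = n ∨ R (N (j + 2)) (N (j + 1))) := by
  rw [← hN]
  constructor
  · intro h
    refine or_iff_not_imp_left.2 fun hj => ?_
    have := h ⟨j + 1, by omega⟩ rfl
    rwa [← hN] at this
  · rintro (hj | hR) j' hj'
    · omega
    · rwa [← hN, ← hj']

end Neighbours

theorem StrictMono.isPeak_comp_iff {α β : Type*} [LinearOrder α] [Preorder β] {f : α → β}
    (hf : StrictMono f) {N : ℕ → α} {i : ℕ} : IsPeak (f ∘ N) i ↔ IsPeak N i := by
  simp only [IsPeak, Function.comp, hf.lt_iff_lt]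

theorem StrictMono.isValley_comp_iff {α β : Type*} [LinearOrder α] [Preorder β] {f : α → β}
    (hf : StrictMono f) {N : ℕ → α} {i : ℕ} : IsValley (f ∘ N) i ↔ IsValley N i := by
  simp only [IsValley, Function.comp, hf.lt_iff_lt]

def IsZigzag {ι α : Type*} [Preorder α] (σ : Equiv.Perm ι) (v : ι → α) : Prop :=
  ∀ k, (v k < v (σ k) ∧ v k < v (σ.symm k)) ∨ (v (σ k) < v k ∧ v (σ.symm k) < v k)

theorem StrictMono.isZigzag_comp_iff {ι α β : Type*} [LinearOrder α] [Preorder β]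
    {σ : Equiv.Perm ι} {v : ι → α} {f : α → β} (hf : StrictMono f) :
    IsZigzag σ (f ∘ v) ↔ IsZigzag σ v := by
  simp only [IsZigzag, Function.comp, hf.lt_iff_lt]

section CrossCount

open Finset

variable {ι : Type*} [Fintype ι] (σ : Equiv.Perm ι) (v : ι → ℕ)

/-- Steps `k → σ k` of the tour through the heights `v` crossing the level between `j - 1`
and `j`. -/
def crossCount (j : ℕ) : ℕ := #{k | min (v k) (v (σ k)) < j ∧ j ≤ max (v k) (v (σ k))}

theorem crossCount_zero : crossCount σ v 0 = 0 := by
  simp [crossCount]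

theorem crossCount_eq_zero_of_forall_lt {j : ℕ} (h : ∀ k, v k < j) : crossCount σ v j = 0 := by
  simp only [crossCount, card_eq_zero, filter_eq_empty_iff, not_and, not_le]
  exact fun k _ _ => max_lt (h k) (h (σ k))

theorem crossCount_succ_add_card_max_eq (j : ℕ) :
    crossCount σ v (j + 1) + #{k | max (v k) (v (σ k)) = j} =
      crossCount σ v j + #{k | min (v k) (v (σ k)) = j} := by
  simp only [crossCount, card_filter, ← sum_add_distrib]
  refine sum_congr rfl fun k _ => ?_
  have := min_le_max (a := v k) (b := v (σ k))
  split_ifs <;> omega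

variable {σ v}

omit [Fintype ι] in
theorem min_eq_or_max_eq_iff_of_injective (hv : Function.Injective v) {k k₀ : ι} :
    (min (v k) (v (σ k)) = v k₀ ∨ max (v k) (v (σ k)) = v k₀) ↔ (k = k₀ ∨ σ k = k₀) := by
  rw [← hv.eq_iff, ← hv.eq_iff (a := σ k)]
  omega

/-- The steps ending at height `v k₀` are `k₀` and `σ⁻¹ k₀`; at a valley both go up from
`v k₀`, at a peak both come down to it. -/
theorem crossCount_succ_of_isZigzag [DecidableEq ι] (hv : Function.Injective v)
    (hz : IsZigzag σ v) (k₀ : ι) :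
    crossCount σ v (v k₀ + 1) = crossCount σ v (v k₀) + 2 ∨
      crossCount σ v (v k₀ + 1) + 2 = crossCount σ v (v k₀) := by
  have hends : ∀ k, (min (v k) (v (σ k)) = v k₀ ∨ max (v k) (v (σ k)) = v k₀) ↔
      (k = k₀ ∨ k = σ.symm k₀) := fun k => by
    rw [min_eq_or_max_eq_iff_of_injective hv, Equiv.eq_symm_apply]
  have hne : k₀ ≠ σ.symm k₀ := fun h => by
    rcases hz k₀ with h' | h' <;> rw [← h] at h' <;> omega
  have hpair : #{k | k = k₀ ∨ k = σ.symm k₀} = 2 := by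
    rw [← card_pair hne]; congr 1; ext k; simp
  have hsucc := crossCount_succ_add_card_max_eq σ v (v k₀)
  rcases hz k₀ with ⟨hr, hl⟩ | ⟨hr, hl⟩
  · have hmax : ∀ k, max (v k) (v (σ k)) ≠ v k₀ := by
      intro k hk
      rcases (hends k).1 (Or.inr hk) with rfl | rfl
      · omega
      · rw [Equiv.apply_symm_apply] at hk; omega
    rw [card_eq_zero.2 (filter_eq_empty_iff.2 fun k _ => hmax k),
      filter_congr fun k _ => (or_iff_left (hmax k)).symm.trans (hends k), hpair] at hsucc
    omega
  · have hmin : ∀ k, min (v k) (v (σ k)) ≠ v k₀ := by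
      intro k hk
      rcases (hends k).1 (Or.inl hk) with rfl | rfl
      · omega
      · rw [Equiv.apply_symm_apply] at hk; omega
    rw [card_eq_zero.2 (filter_eq_empty_iff.2 fun k _ => hmin k),
      filter_congr fun k _ => (or_iff_right (hmin k)).symm.trans (hends k), hpair] at hsucc
    omega

theorem crossCount_succ_of_isZigzag_perm {n : ℕ} {σ ord : Equiv.Perm (Fin (n + 1))}
    (hz : IsZigzag σ (fun k => (ord k : ℕ))) {i : ℕ} (hi : i ≤ n) :
    crossCount σ (fun k => (ord k : ℕ)) (i + 1) = crossCount σ (fun k => (ord k : ℕ)) i + 2 ∨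
      crossCount σ (fun k => (ord k : ℕ)) (i + 1) + 2 = crossCount σ (fun k => (ord k : ℕ)) i := by
  have := crossCount_succ_of_isZigzag (Fin.val_injective.comp ord.injective) hz
    (ord.symm ⟨i, by omega⟩)
  rwa [Function.comp_apply, Equiv.apply_symm_apply] at this

end CrossCount

section Arcs

open Filter

variable {α β : Type*} [ConditionallyCompleteLinearOrder α] [DenselyOrdered α]
  [TopologicalSpace α] [OrderTopology α] [LinearOrder β] [TopologicalSpace β] [OrderTopology β]
  {f : α → β} {a b : α}

theorem injOn_Icc_of_forall_not_isLocalExtr (hf : ContinuousOn f (Icc a b))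
    (h : ∀ t ∈ Ioo a b, ¬IsLocalExtr f t) : InjOn f (Icc a b) := by
  intro s hs t ht hst
  by_contra hne
  wlog hlt : s < t generalizing s t
  · exact this ht hs hst.symm (Ne.symm hne) (lt_of_le_of_ne (not_lt.1 hlt) (Ne.symm hne))
  obtain ⟨c, hc, hext⟩ := exists_isLocalExtr_Ioo hlt (hf.mono (Icc_subset_Icc hs.1 ht.2)) hst
  exact h c ⟨hs.1.trans_lt hc.1, hc.2.trans_le ht.2⟩ hext

theorem ContinuousOn.image_Ioo_eq_uIoo_of_injOn (hab : a ≤ b) (hf : ContinuousOn f (Icc a b))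
    (hinj : InjOn f (Icc a b)) : f '' Ioo a b = uIoo (f a) (f b) := by
  rcases hf.strictMonoOn_of_injOn_Icc' hab hinj with hmono | hanti
  · rw [hf.image_Ioo_of_strictMonoOn hab hmono,
      uIoo_of_le (hmono.monotoneOn (left_mem_Icc.2 hab) (right_mem_Icc.2 hab) hab)]
  · rw [hf.image_Ioo_of_strictAntiOn hab hanti,
      uIoo_of_ge (hanti.antitoneOn (left_mem_Icc.2 hab) (right_mem_Icc.2 hab) hab)]

open Classical in
theorem encard_Ico_inter_preimage_singleton (hab : a ≤ b) (hf : ContinuousOn f (Icc a b))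
    (hinj : InjOn f (Icc a b)) {r : β} (hr : f a ≠ r) :
    (Ico a b ∩ f ⁻¹' {r}).encard = if r ∈ uIoo (f a) (f b) then 1 else 0 := by
  have hIoo : Ico a b ∩ f ⁻¹' {r} = Ioo a b ∩ f ⁻¹' {r} := by
    rcases hab.lt_or_eq with hlt | rfl
    · rw [← Ioo_insert_left hlt, insert_inter_of_notMem (t := f ⁻¹' {r}) hr]
    · simp
  rw [hIoo, ← (hinj.mono (inter_subset_left.trans Ioo_subset_Icc_self)).encard_image,
    image_inter_preimage, hf.image_Ioo_eq_uIoo_of_injOn hab hinj]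
  split_ifs with h
  · rw [inter_eq_right.2 (singleton_subset_iff.2 h), encard_singleton]
  · rw [inter_singleton_eq_empty.2 h, encard_empty]

theorem IsLocalMin.lt_of_injOn_Icc_left (hmin : IsLocalMin f a) (hab : a < b)
    (hf : ContinuousOn f (Icc a b)) (hinj : InjOn f (Icc a b)) : f a < f b := by
  refine lt_of_le_of_ne (not_lt.1 fun hba => ?_)
    (hinj.ne (left_mem_Icc.2 hab.le) (right_mem_Icc.2 hab.le) hab.ne)
  have hanti := hf.strictAntiOn_of_injOn_Icc hab.le hba.le hinj
  have := nhdsGT_neBot_of_exists_gt ⟨b, hab⟩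
  obtain ⟨t, hle, ht⟩ := ((hmin.filter_mono nhdsWithin_le_nhds).and
    (Ioo_mem_nhdsGT hab)).exists (f := 𝓝[>] a)
  exact (hanti (left_mem_Icc.2 hab.le) (Ioo_subset_Icc_self ht) ht.1).not_ge hle

theorem IsLocalMin.lt_of_injOn_Icc_right (hmin : IsLocalMin f b) (hab : a < b)
    (hf : ContinuousOn f (Icc a b)) (hinj : InjOn f (Icc a b)) : f b < f a := by
  refine lt_of_le_of_ne (not_lt.1 fun hab' => ?_)
    (hinj.ne (right_mem_Icc.2 hab.le) (left_mem_Icc.2 hab.le) hab.ne')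
  have hmono := hf.strictMonoOn_of_injOn_Icc hab.le hab'.le hinj
  have := nhdsLT_neBot_of_exists_lt ⟨a, hab⟩
  obtain ⟨t, hle, ht⟩ := ((hmin.filter_mono nhdsWithin_le_nhds).and
    (Ioo_mem_nhdsLT hab)).exists (f := 𝓝[<] b)
  exact (hmono (Ioo_subset_Icc_self ht) (right_mem_Icc.2 hab.le) ht.2).not_ge hle

theorem IsLocalMax.lt_of_injOn_Icc_left (hmax : IsLocalMax f a) (hab : a < b)
    (hf : ContinuousOn f (Icc a b)) (hinj : InjOn f (Icc a b)) : f b < f a :=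
  IsLocalMin.lt_of_injOn_Icc_left (β := βᵒᵈ) hmax hab hf hinj

theorem IsLocalMax.lt_of_injOn_Icc_right (hmax : IsLocalMax f b) (hab : a < b)
    (hf : ContinuousOn f (Icc a b)) (hinj : InjOn f (Icc a b)) : f a < f b :=
  IsLocalMin.lt_of_injOn_Icc_right (β := βᵒᵈ) hmax hab hf hinj

end Arcs

theorem Monotone.encard_Ico_inter_eq_sum {α : Type*} [LinearOrder α] {b : ℕ → α}
    (hb : Monotone b) (S : Set α) (N : ℕ) :
    (Ico (b 0) (b N) ∩ S).encard = ∑ k ∈ Finset.range N, (Ico (b k) (b (k + 1)) ∩ S).encard := by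
  induction N with
  | zero => simp
  | succ N ih =>
    rw [Finset.sum_range_succ, ← ih, ← Ico_union_Ico_eq_Ico (hb (Nat.zero_le N)) (hb N.le_succ),
      union_inter_distrib_right, encard_union_eq]
    exact Ico_disjoint_Ico_same.mono inter_subset_left inter_subset_left

section Periodic

variable {α β : Type*} [AddGroup α] [TopologicalSpace α] [ContinuousSub α] [Preorder β]
  {f : α → β} {p t : α}

theorem Function.Periodic.isLocalMin_add (hf : Function.Periodic f p) (hmin : IsLocalMin f t) :
    IsLocalMin f (t + p) := by
  have h := IsLocalMin.comp_continuous (g := (· - p)) (b := t + p)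
    (by rwa [add_sub_cancel_right]) (continuous_sub_right p).continuousAt
  rwa [show f ∘ (· - p) = f from funext hf.sub_eq] at h

theorem Function.Periodic.isLocalMax_add (hf : Function.Periodic f p) (hmax : IsLocalMax f t) :
    IsLocalMax f (t + p) :=
  Function.Periodic.isLocalMin_add (β := βᵒᵈ) hf hmax

end Periodic

section LocalExtrTransfer

open Filter

variable {X Y β : Type*} [TopologicalSpace X] [TopologicalSpace Y] [Preorder β] {K : Set X}
  {f : X → β} {ψ : Y → X} {t : Y}

theorem isLocalMinOn_iff_isLocalMin_comp (h : map ψ (𝓝 t) = 𝓝[K] (ψ t)) :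
    IsLocalMinOn f K (ψ t) ↔ IsLocalMin (f ∘ ψ) t := by
  rw [IsLocalMinOn, ← h]; rfl

theorem isLocalMaxOn_iff_isLocalMax_comp (h : map ψ (𝓝 t) = 𝓝[K] (ψ t)) :
    IsLocalMaxOn f K (ψ t) ↔ IsLocalMax (f ∘ ψ) t := by
  rw [IsLocalMaxOn, ← h]; rfl

theorem isLocalExtrOn_iff_isLocalExtr_comp (h : map ψ (𝓝 t) = 𝓝[K] (ψ t)) :
    IsLocalExtrOn f K (ψ t) ↔ IsLocalExtr (f ∘ ψ) t :=
  (isLocalMinOn_iff_isLocalMin_comp h).or (isLocalMaxOn_iff_isLocalMax_comp h)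

end LocalExtrTransfer

section CircleParam

open Filter Real

variable {X : Type*} [TopologicalSpace X] {K : Set X} (e : K ≃ₜ Circle) (x₀ : K)

def circleParam (t : ℝ) : X := e.symm (Circle.exp t * e x₀)

theorem continuous_circleParam : Continuous (circleParam e x₀) := by
  unfold circleParam; fun_prop

theorem periodic_circleParam : Function.Periodic (circleParam e x₀) (2 * π) := fun t => by
  simp [circleParam]

theorem circleParam_zero : circleParam e x₀ 0 = x₀ := by
  simp [circleParam]

theorem injOn_circleParam : InjOn (circleParam e x₀) (Ico 0 (2 * π)) := fun _ hs _ ht hst =>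
  Circle.exp_injOn_Ico (by simp) hs ht
    (mul_right_cancel (e.symm.injective (Subtype.val_injective hst)))

theorem image_circleParam : circleParam e x₀ '' Ico 0 (2 * π) = K := by
  refine subset_antisymm (image_subset_iff.2 fun t _ => (e.symm _).2) fun y hy => ?_
  refine ⟨Circle.angleDiff (e x₀) (e ⟨y, hy⟩), ⟨Circle.angleDiff_nonneg _ _,
    Circle.angleDiff_lt_two_pi _ _⟩, ?_⟩
  simp [circleParam, Circle.exp_angleDiff_mul]

theorem map_circleParam_nhds (t : ℝ) :
    map (circleParam e x₀) (𝓝 t) = 𝓝[K] (circleParam e x₀ t) := by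
  have hexp : map Circle.exp (𝓝 t) = 𝓝 (Circle.exp t) :=
    isLocalHomeomorph_circleExp.map_nhds_eq t
  have hmul := (Homeomorph.mulRight (e x₀)).map_nhds_eq (Circle.exp t)
  have he := e.symm.map_nhds_eq (Circle.exp t * e x₀)
  change _ = 𝓝[K] ((e.symm (Circle.exp t * e x₀) : K) : X)
  rw [← map_nhds_subtype_val, ← he,
    show Circle.exp t * e x₀ = Homeomorph.mulRight (e x₀) (Circle.exp t) from rfl, ← hmul, ← hexp,
    map_map, map_map, map_map]
  rfl

end CircleParam

section SortedExtrema

variable {n : ℕ}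

structure IsSortedExtrema (G : ℝ → ℝ) (p : ℝ) (τ : Fin (n + 1) → ℝ) : Prop where
  strictMono : StrictMono τ
  zero : τ 0 = 0
  last_lt : τ (Fin.last n) < p
  isLocalExtr : ∀ k, IsLocalExtr G (τ k)
  mem_range : ∀ t ∈ Ico 0 p, IsLocalExtr G t → t ∈ range τ

theorem isSortedExtrema_comp_sort {G : ℝ → ℝ} {p : ℝ} {pos : Fin (n + 1) → ℝ}
    (hinj : Function.Injective pos) (hmem : ∀ i, pos i ∈ Ico 0 p) (h0 : pos 0 = 0)
    (hext : ∀ i, IsLocalExtr G (pos i))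
    (hrange : ∀ t ∈ Ico 0 p, IsLocalExtr G t → t ∈ range pos) :
    IsSortedExtrema G p (pos ∘ Tuple.sort pos) where
  strictMono := (Tuple.monotone_sort pos).strictMono_of_injective
    (hinj.comp (Tuple.sort pos).injective)
  zero := by
    refine le_antisymm ?_ (hmem _).1
    have := Tuple.monotone_sort pos (Fin.zero_le ((Tuple.sort pos).symm 0))
    rwa [Function.comp_apply, Function.comp_apply, Equiv.apply_symm_apply, h0] at this
  last_lt := (hmem _).2
  isLocalExtr _ := hext _
  mem_range t ht hext' := by
    obtain ⟨i, rfl⟩ := hrange t ht hext'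
    exact ⟨(Tuple.sort pos).symm i, by simp⟩

/-- `τ 0, …, τ n, p, p, …`: the arcs `[b k, b (k + 1)]`, `k ≤ n`, cut `[0, p]` at the `τ k`. -/
def cyclicBreak (τ : Fin (n + 1) → ℝ) (p : ℝ) (k : ℕ) : ℝ :=
  if h : k < n + 1 then τ ⟨k, h⟩ else p

theorem cyclicBreak_of_lt {τ : Fin (n + 1) → ℝ} {p : ℝ} {k : ℕ} (hk : k < n + 1) :
    cyclicBreak τ p k = τ ⟨k, hk⟩ :=
  dif_pos hk

theorem cyclicBreak_val (τ : Fin (n + 1) → ℝ) (p : ℝ) (k : Fin (n + 1)) :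
    cyclicBreak τ p k = τ k :=
  cyclicBreak_of_lt k.is_lt

theorem cyclicBreak_of_le {τ : Fin (n + 1) → ℝ} {p : ℝ} {k : ℕ} (hk : n + 1 ≤ k) :
    cyclicBreak τ p k = p := by
  simp [cyclicBreak, not_lt.2 hk]

namespace IsSortedExtrema

variable {G : ℝ → ℝ} {p : ℝ} {τ : Fin (n + 1) → ℝ}

theorem monotone_cyclicBreak (hτ : IsSortedExtrema G p τ) : Monotone (cyclicBreak τ p) := by
  intro k l hkl
  by_cases hl : l < n + 1
  · rw [cyclicBreak_of_lt (by omega : k < n + 1), cyclicBreak_of_lt hl]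
    exact hτ.strictMono.monotone (Fin.mk_le_mk.2 hkl)
  · rw [cyclicBreak_of_le (not_lt.1 hl)]
    by_cases hk : k < n + 1
    · rw [cyclicBreak_of_lt hk]
      exact (hτ.strictMono.monotone (Fin.le_last _)).trans hτ.last_lt.le
    · rw [cyclicBreak_of_le (not_lt.1 hk)]

theorem cyclicBreak_lt_succ (hτ : IsSortedExtrema G p τ) (k : Fin (n + 1)) :
    cyclicBreak τ p k < cyclicBreak τ p (k + 1) := by
  rw [cyclicBreak_val]
  rcases k.is_le.lt_or_eq with hk | hk
  · rw [cyclicBreak_of_lt (by omega : (k : ℕ) + 1 < n + 1)]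
    exact hτ.strictMono (Fin.mk_lt_mk.2 (Nat.lt_add_one k))
  · rw [cyclicBreak_of_le (by omega), show k = Fin.last n from Fin.ext hk]
    exact hτ.last_lt

theorem cyclicBreak_succ (hτ : IsSortedExtrema G p τ) (k : Fin (n + 1)) :
    cyclicBreak τ p (k + 1) = τ (finRotate _ k) ∨
      cyclicBreak τ p (k + 1) = τ (finRotate _ k) + p := by
  by_cases hk : k = Fin.last n
  · right
    rw [hk, finRotate_last, hτ.zero, zero_add, Fin.val_last, cyclicBreak_of_le le_rfl]
  · left
    rw [← cyclicBreak_val τ p, coe_finRotate_of_ne_last hk]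

theorem injOn_arc (hτ : IsSortedExtrema G p τ) (hG : Continuous G) (k : Fin (n + 1)) :
    InjOn G (Icc (cyclicBreak τ p k) (cyclicBreak τ p (k + 1))) := by
  refine injOn_Icc_of_forall_not_isLocalExtr hG.continuousOn fun t ht hext => ?_
  have hb := hτ.monotone_cyclicBreak
  have ht' : t ∈ Ico 0 p := by
    refine ⟨?_, ?_⟩
    · rw [← hτ.zero, ← cyclicBreak_val τ p 0]
      exact (hb (Nat.zero_le _)).trans ht.1.le
    · rw [← cyclicBreak_of_le (τ := τ) (p := p) (le_refl (n + 1))]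
      exact ht.2.trans_le (hb (by omega))
  obtain ⟨j, rfl⟩ := hτ.mem_range t ht' hext
  rw [← cyclicBreak_val τ p j] at ht
  have h1 := hb.reflect_lt ht.1
  have h2 := hb.reflect_lt ht.2
  omega

theorem apply_cyclicBreak_succ (hτ : IsSortedExtrema G p τ) (hper : Function.Periodic G p)
    (k : Fin (n + 1)) : G (cyclicBreak τ p (k + 1)) = G (τ (finRotate _ k)) := by
  rcases hτ.cyclicBreak_succ k with h | h <;> rw [h]
  exact hper _

theorem isLocalMin_cyclicBreak_succ (hτ : IsSortedExtrema G p τ) (hper : Function.Periodic G p)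
    {k : Fin (n + 1)} (hmin : IsLocalMin G (τ (finRotate _ k))) :
    IsLocalMin G (cyclicBreak τ p (k + 1)) := by
  rcases hτ.cyclicBreak_succ k with h | h <;> rw [h]
  exacts [hmin, hper.isLocalMin_add hmin]

theorem isLocalMax_cyclicBreak_succ (hτ : IsSortedExtrema G p τ) (hper : Function.Periodic G p)
    {k : Fin (n + 1)} (hmax : IsLocalMax G (τ (finRotate _ k))) :
    IsLocalMax G (cyclicBreak τ p (k + 1)) := by
  rcases hτ.cyclicBreak_succ k with h | h <;> rw [h]
  exacts [hmax, hper.isLocalMax_add hmax]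

/-- `τ k` ends the arc `k' = k - 1` (cyclically) and starts the arc `k`, on each of which `G` is
injective, hence monotone. -/
theorem isZigzag (hτ : IsSortedExtrema G p τ) (hG : Continuous G)
    (hper : Function.Periodic G p) : IsZigzag (finRotate (n + 1)) (G ∘ τ) := by
  intro k
  set k' := (finRotate _).symm k
  have hk' : finRotate _ k' = k := Equiv.apply_symm_apply _ _
  have harc := hτ.injOn_arc hG
  have hlt := hτ.cyclicBreak_lt_succ
  simp only [Function.comp]
  rcases hτ.isLocalExtr k with hmin | hmax
  · left
    constructor
    · have := IsLocalMin.lt_of_injOn_Icc_left (by rwa [cyclicBreak_val]) (hlt k) hG.continuousOn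
        (harc k)
      rwa [cyclicBreak_val, hτ.apply_cyclicBreak_succ hper] at this
    · have := (hτ.isLocalMin_cyclicBreak_succ hper (hk' ▸ hmin)).lt_of_injOn_Icc_right
        (hlt k') hG.continuousOn (harc k')
      rwa [cyclicBreak_val, hτ.apply_cyclicBreak_succ hper, hk'] at this
  · right
    constructor
    · have := IsLocalMax.lt_of_injOn_Icc_left (by rwa [cyclicBreak_val]) (hlt k) hG.continuousOn
        (harc k)
      rwa [cyclicBreak_val, hτ.apply_cyclicBreak_succ hper] at this
    · have := (hτ.isLocalMax_cyclicBreak_succ hper (hk' ▸ hmax)).lt_of_injOn_Icc_right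
        (hlt k') hG.continuousOn (harc k')
      rwa [cyclicBreak_val, hτ.apply_cyclicBreak_succ hper, hk'] at this

open Classical Finset in
theorem ncard_Ico_inter_preimage (hτ : IsSortedExtrema G p τ) (hG : Continuous G)
    (hper : Function.Periodic G p) {r : ℝ} (hr : ∀ k, G (τ k) ≠ r) :
    (Set.Ico 0 p ∩ G ⁻¹' {r}).ncard =
      #{k | r ∈ uIoo (G (τ k)) (G (τ (finRotate _ k)))} := by
  have h0 : cyclicBreak τ p 0 = 0 := (cyclicBreak_of_lt n.succ_pos).trans hτ.zero
  have hterm : ∀ k : Fin (n + 1),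
      (Ico (cyclicBreak τ p k) (cyclicBreak τ p (k + 1)) ∩ G ⁻¹' {r}).encard =
        if r ∈ uIoo (G (τ k)) (G (τ (finRotate _ k))) then 1 else 0 := fun k => by
    rw [encard_Ico_inter_preimage_singleton (hτ.cyclicBreak_lt_succ k).le hG.continuousOn
      (hτ.injOn_arc hG k) (by rw [cyclicBreak_val]; exact hr k), cyclicBreak_val,
      hτ.apply_cyclicBreak_succ hper]
  rw [ncard_def, show Set.Ico 0 p = Set.Ico (cyclicBreak τ p 0) (cyclicBreak τ p (n + 1)) by
      rw [h0, cyclicBreak_of_le le_rfl],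
    hτ.monotone_cyclicBreak.encard_Ico_inter_eq_sum,
    ← Fin.sum_univ_eq_sum_range (fun k => (Ico (cyclicBreak τ p k) (cyclicBreak τ p (k + 1)) ∩
      G ⁻¹' {r}).encard), Finset.sum_congr rfl fun k _ => hterm k, card_filter,
    ← ENat.toNat_natCast (Finset.sum _ _), Nat.cast_sum]
  simp only [Nat.cast_ite, Nat.cast_one, Nat.cast_zero]

end IsSortedExtrema

end SortedExtrema

namespace KnotMorse

variable {K : Set S3} (m : KnotMorse K) {N : ℕ → ℕ}

def critPt (i : Fin (m.n + 1)) : S3 := (m.crit_exists i).choose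

theorem critPt_mem (i : Fin (m.n + 1)) : m.critPt i ∈ K :=
  (m.crit_exists i).choose_spec.1.1

theorem isLocalExtrOn_critPt (i : Fin (m.n + 1)) : IsLocalExtrOn m.h K (m.critPt i) :=
  (m.crit_exists i).choose_spec.1.2.1

theorem h_critPt (i : Fin (m.n + 1)) : m.h (m.critPt i) = m.c i :=
  (m.crit_exists i).choose_spec.1.2.2

theorem exists_eq_critPt {x : S3} (hx : x ∈ K) (hext : IsLocalExtrOn m.h K x) :
    ∃ i, x = m.critPt i := by
  obtain ⟨i, hi⟩ := m.crit_complete x hx hext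
  exact ⟨i, (m.crit_exists i).choose_spec.2 x ⟨hx, hext, hi⟩⟩

theorem c_lt_midpt_of_le {i : Fin (m.n + 1)} {j : Fin m.n} (h : (i : ℕ) ≤ j) :
    m.c i < m.midpt j := by
  have := m.c_mono.monotone (show i ≤ j.castSucc from Fin.le_def.2 (by simpa using h))
  have := m.c_mono (Fin.castSucc_lt_succ (i := j))
  rw [midpt]
  linarith

theorem midpt_lt_c_of_lt {i : Fin (m.n + 1)} {j : Fin m.n} (h : (j : ℕ) < i) :
    m.midpt j < m.c i := by
  have := m.c_mono.monotone (show j.succ ≤ i from Fin.le_def.2 (by simpa using h))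
  have := m.c_mono (Fin.castSucc_lt_succ (i := j))
  rw [midpt]
  linarith

theorem c_lt_midpt_iff (i : Fin (m.n + 1)) (j : Fin m.n) : m.c i < m.midpt j ↔ (i : ℕ) ≤ j :=
  ⟨fun h => not_lt.1 fun hji => (m.midpt_lt_c_of_lt hji).asymm h, m.c_lt_midpt_of_le⟩

theorem midpt_lt_c_iff (i : Fin (m.n + 1)) (j : Fin m.n) : m.midpt j < m.c i ↔ (j : ℕ) < i :=
  ⟨fun h => not_le.1 fun hij => (m.c_lt_midpt_of_le hij).asymm h, m.midpt_lt_c_of_lt⟩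

theorem midpt_mem_uIoo_iff (i i' : Fin (m.n + 1)) (j : Fin m.n) :
    m.midpt j ∈ uIoo (m.c i) (m.c i') ↔ min (i : ℕ) i' < j + 1 ∧ j + 1 ≤ max (i : ℕ) i' := by
  simp only [uIoo, mem_Ioo, inf_lt_iff, lt_sup_iff, c_lt_midpt_iff, midpt_lt_c_iff]
  omega

theorem c_ne_midpt (i : Fin (m.n + 1)) (j : Fin m.n) : m.c i ≠ m.midpt j := by
  rcases le_or_gt (i : ℕ) j with h | h
  exacts [(m.c_lt_midpt_of_le h).ne, (m.midpt_lt_c_of_lt h).ne']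

open Real in
/-- `G = h ∘ ψ` for a `2π`-periodic parametrization `ψ` of `K`, and `ord k` is the level of the
`k`-th critical point met along `ψ`. -/
theorem exists_periodic_model (hK : IsKnot K) :
    ∃ (G : ℝ → ℝ) (τ : Fin (m.n + 1) → ℝ) (ord : Equiv.Perm (Fin (m.n + 1))),
      Continuous G ∧ Function.Periodic G (2 * π) ∧ IsSortedExtrema G (2 * π) τ ∧
      (∀ k, G (τ k) = m.c (ord k)) ∧
      ∀ j, m.cnt j = (Ico 0 (2 * π) ∩ G ⁻¹' {m.midpt j}).ncard := by
  obtain ⟨e⟩ := hK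
  obtain ⟨x₀, hx₀⟩ : ∃ x₀ : K, (x₀ : S3) = m.critPt 0 := ⟨⟨_, m.critPt_mem 0⟩, rfl⟩
  set ψ := circleParam e x₀
  have hinj := injOn_circleParam e x₀
  have himage := image_circleParam e x₀
  have hextr : ∀ t, IsLocalExtr (m.h ∘ ψ) t ↔ IsLocalExtrOn m.h K (ψ t) := fun t =>
    (isLocalExtrOn_iff_isLocalExtr_comp (map_circleParam_nhds e x₀ t)).symm
  have hcrit : ∀ i, ∃ t ∈ Ico 0 (2 * π), ψ t = m.critPt i := fun i => by
    rw [← mem_image, himage]; exact m.critPt_mem i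
  choose pos hposIco hψpos using hcrit
  have hGpos : ∀ i, (m.h ∘ ψ) (pos i) = m.c i := fun i => by
    rw [Function.comp_apply, hψpos, h_critPt]
  have hτ : IsSortedExtrema (m.h ∘ ψ) (2 * π) (pos ∘ Tuple.sort pos) := by
    refine isSortedExtrema_comp_sort (fun i i' h => m.c_mono.injective ?_) hposIco ?_ (fun i => ?_)
      fun t ht hext => ?_
    · rw [← hGpos, h, hGpos]
    · exact hinj (hposIco 0) ⟨le_rfl, by positivity⟩
        ((hψpos 0).trans (by rw [circleParam_zero, hx₀]))
    · rw [hextr, hψpos]; exact m.isLocalExtrOn_critPt i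
    · obtain ⟨i, hi⟩ := m.exists_eq_critPt (himage ▸ mem_image_of_mem ψ ht) ((hextr t).1 hext)
      exact ⟨i, hinj (hposIco i) ht ((hψpos i).trans hi.symm)⟩
  refine ⟨m.h ∘ ψ, _, Tuple.sort pos, m.smooth_twoCrit.1.continuous.comp
    (continuous_circleParam e x₀), (periodic_circleParam e x₀).comp m.h, hτ,
    fun k => hGpos _, fun j => ?_⟩
  rw [cnt, ← (hinj.mono inter_subset_left).ncard_image, preimage_comp, image_inter_preimage,
    himage]

theorem exists_isZigzag_cnt_eq_crossCount (hK : IsKnot K) :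
    ∃ ord : Equiv.Perm (Fin (m.n + 1)), IsZigzag (finRotate _) (fun k => (ord k : ℕ)) ∧
      ∀ j : Fin m.n, m.cnt j = crossCount (finRotate _) (fun k => (ord k : ℕ)) (j + 1) := by
  classical
  obtain ⟨G, τ, ord, hG, hper, hτ, hGτ, hcnt⟩ := m.exists_periodic_model hK
  have hGord : G ∘ τ = m.c ∘ ord := funext hGτ
  refine ⟨ord, ?_, fun j => ?_⟩
  · have hz := hτ.isZigzag hG hper
    rw [hGord, m.c_mono.isZigzag_comp_iff] at hz
    exact Fin.val_strictMono.isZigzag_comp_iff.2 hz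
  · rw [hcnt, hτ.ncard_Ico_inter_preimage hG hper fun k => (hGτ k).trans_ne (m.c_ne_midpt _ j),
      crossCount]
    refine congrArg Finset.card (Finset.filter_congr fun k _ => ?_)
    simp only [hGτ, midpt_mem_uIoo_iff]

theorem thickIdx_iff_isPeak (hN : ∀ j : Fin m.n, N (j + 1) = m.cnt j) (h0 : N 0 < N 1)
    (hn : N (m.n + 1) < N m.n) (j : Fin m.n) : m.ThickIdx j ↔ IsPeak N (j + 1) := by
  rw [ThickIdx, forall_val_succ_eq_imp_iff (· < ·) hN, forall_eq_val_succ_imp_iff (· < ·) hN,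
    IsPeak, Nat.add_sub_cancel]
  refine and_congr (or_iff_right_of_imp fun hj => ?_) (or_iff_right_of_imp fun hj => ?_)
  · rwa [hj]
  · rwa [show (j : ℕ) + 2 = m.n + 1 by omega, hj]

theorem thinIdx_iff_isValley (hN : ∀ j : Fin m.n, N (j + 1) = m.cnt j) (h0 : N 0 < N 1)
    (hn : N (m.n + 1) < N m.n) (j : Fin m.n) : m.ThinIdx j ↔ IsValley N (j + 1) := by
  rw [ThinIdx, forall_val_succ_eq_imp_iff (fun a b => b < a) hN,
    forall_eq_val_succ_imp_iff (fun a b => b < a) hN, IsValley, Nat.add_sub_cancel]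
  constructor
  · rintro ⟨hpos, hlt, hl, hr⟩
    exact ⟨hl.resolve_left (by omega), hr.resolve_left (by omega)⟩
  · rintro ⟨hl, hr⟩
    have hpos : 0 < (j : ℕ) := Nat.pos_of_ne_zero fun hj => by
      rw [hj] at hl; exact absurd hl (not_lt.2 h0.le)
    have hlt : (j : ℕ) + 1 < m.n := lt_of_le_of_ne j.is_lt fun hj => by
      rw [show (j : ℕ) + 2 = m.n + 1 by omega, hj] at hr; exact absurd hr (not_lt.2 hn.le)
    exact ⟨hpos, hlt, Or.inr hl, Or.inr hr⟩

theorem sum_indicator_thickIdx_eq (hN : ∀ j : Fin m.n, N (j + 1) = m.cnt j) (h0 : N 0 < N 1)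
    (hn : N (m.n + 1) < N m.n) :
    ∑ j : Fin m.n, {i | m.ThickIdx i}.indicator (fun i => (m.cnt i : ℤ) ^ 2) j =
      ∑ i ∈ Finset.range m.n, {i | IsPeak N i}.indicator (fun i => (N i : ℤ) ^ 2) (i + 1) := by
  classical
  rw [← Fin.sum_univ_eq_sum_range
    (fun i => {i | IsPeak N i}.indicator (fun i => (N i : ℤ) ^ 2) (i + 1))]
  refine Finset.sum_congr rfl fun j _ => ?_
  simp only [Set.indicator_apply, Set.mem_ofPred_eq, m.thickIdx_iff_isPeak hN h0 hn, hN]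

theorem sum_indicator_thinIdx_eq (hN : ∀ j : Fin m.n, N (j + 1) = m.cnt j) (h0 : N 0 < N 1)
    (hn : N (m.n + 1) < N m.n) :
    ∑ j : Fin m.n, {i | m.ThinIdx i}.indicator (fun i => (m.cnt i : ℤ) ^ 2) j =
      ∑ i ∈ Finset.range m.n, {i | IsValley N i}.indicator (fun i => (N i : ℤ) ^ 2) (i + 1) := by
  classical
  rw [← Fin.sum_univ_eq_sum_range
    (fun i => {i | IsValley N i}.indicator (fun i => (N i : ℤ) ^ 2) (i + 1))]
  refine Finset.sum_congr rfl fun j _ => ?_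
  simp only [Set.indicator_apply, Set.mem_ofPred_eq, m.thinIdx_iff_isValley hN h0 hn, hN]

end KnotMorse

/-- If `a₁, …, a_m` are the intersection numbers of `K` with the thick levels of
`h ∈ 𝓜(K)` and `b₁, …, b_{m-1}` those with the thin levels, then
`w(h) = ½ (Σ aᵢ² − Σ bᵢ²)`. -/
theorem width_eq_thick_thin_formula (K : Set S3) (hK : IsKnot K) (m : KnotMorse K) :
    (2 : ℤ) * m.width =
      (∑ i : Fin m.n, Set.indicator {i | m.ThickIdx i} (fun i => ((m.cnt i : ℤ)) ^ 2) i) -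
      (∑ i : Fin m.n, Set.indicator {i | m.ThinIdx i} (fun i => ((m.cnt i : ℤ)) ^ 2) i) := by
  obtain ⟨ord, hzig, hcnt⟩ := m.exists_isZigzag_cnt_eq_crossCount hK
  set N := crossCount (finRotate _) (fun k => (ord k : ℕ))
  have hN : ∀ j : Fin m.n, N (j + 1) = m.cnt j := fun j => (hcnt j).symm
  have hN0 : N 0 = 0 := crossCount_zero _ _
  have hNn : N (m.n + 1) = 0 := crossCount_eq_zero_of_forall_lt _ _ fun k => (ord k).is_lt
  have hstep : ∀ i ≤ m.n, N (i + 1) = N i + 2 ∨ N (i + 1) + 2 = N i := fun _ hi =>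
    crossCount_succ_of_isZigzag_perm hzig hi
  have h01 : N 0 < N 1 := by
    have := hstep 0 (Nat.zero_le _)
    rw [zero_add, hN0] at this
    rw [hN0]
    omega
  have hn1 : N (m.n + 1) < N m.n := by
    have := hstep m.n le_rfl
    rw [hNn] at this ⊢
    omega
  have hsum := sum_indicator_peak_sub_sum_indicator_valley (N := fun i => (N i : ℤ)) (n := m.n)
    two_pos (by simp [hN0]) (by simp [hNn]) fun i hi => by have := hstep i hi; omega
  simp only [← Function.comp_def (Nat.cast : ℕ → ℤ) N, Nat.strictMono_cast.isPeak_comp_iff,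
    Nat.strictMono_cast.isValley_comp_iff] at hsum
  rw [m.sum_indicator_thickIdx_eq hN h01 hn1, m.sum_indicator_thinIdx_eq hN h01 hn1, hsum,
    KnotMorse.width, Nat.cast_sum, ← Fin.sum_univ_eq_sum_range (fun i => (N (i + 1) : ℤ))]
  simp only [hN]
end
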